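/- arXiv:2306.10294 — 2 statements merged into one kernel-verified Lean document; each statement's English description precedes it below -/
import Mathlib

section
/- Assume q is a power of an odd prime. Let l ∈ {0,…,m−1} and let a, b, c ∈ {0,…,r−1} be pairwise distinct with a + b = 2c. Index rows and columns of rm×rm matrices by the pairs (j,i) ordering the canonical family A. Then the symmetric rm×rm matrix M over F_{q^m} with entries M_{(l,a),(l,b)} = M_{(l,b),(l,a)} = 1, M_{(l,c),(l,c)} = −2, and all other entries zero, belongs to the matrix code of relations C_mat(A), and M has rank 3. -/
/-!
For `a + b = 2c` the canonical vectors satisfy `a_(l,a) ⋆ a_(l,b) = a_(l,c) ⋆ a_(l,c)`, because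
`(x^a y)(x^b y) = (x^c y)^2` and raising to the power `q^l` is multiplicative; `M` is the matrix of
this quadratic relation. Outside the rows and columns `(l,a), (l,b), (l,c)` the matrix `M` vanishes,
and on them it is `!![0, 1, 0; 1, 0, 0; 0, 0, -2]`, of determinant `2 ≠ 0` in odd characteristic,
so `M` has rank `3`.
-/

open Matrix

/-- Componentwise (Schur) product of two vectors. -/
def schur {F : Type*} [Field F] {n : ℕ} (a b : Fin n → F) : Fin n → F :=
  fun t => a t * b t

/-- The matrix code of quadratic relations associated with the ordered family `v`. -/
def Cmat {F : Type*} [Field F] {n : ℕ} {ι : Type*} [Fintype ι] [LinearOrder ι]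
    (v : ι → Fin n → F) : Set (Matrix ι ι F) :=
  { M | ∃ c : ι → ι → F,
      (∑ i : ι, ∑ j : ι, (if i ≤ j then c i j • schur (v i) (v j) else 0)) = 0 ∧
      (∀ i j : ι, i < j → M i j = c i j ∧ M j i = c i j) ∧
      (∀ i : ι, M i i = 2 * c i i) }

/-- Linear order on the index pairs `(j,i)` of the canonical family. -/
noncomputable instance pairLO (m r : ℕ) : LinearOrder (Fin m × Fin r) :=
  LinearOrder.lift' (fun p => finProdFinEquiv p) finProdFinEquiv.injective

theorem Matrix.rank_le_card_of_row_eq_zero {ι ι' κ F : Type*} [Field F] [Finite ι] [Fintype ι']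
    [Fintype κ] (M : Matrix ι ι' F) (f : κ → ι) (h : ∀ i ∉ Set.range f, M i = 0) :
    M.rank ≤ Fintype.card κ := by
  rw [rank_eq_finrank_span_row]
  calc Module.finrank F (Submodule.span F (Set.range M.row))
      ≤ Module.finrank F (Submodule.span F (Set.range (M.row ∘ f))) := by
        refine Submodule.finrank_mono (Submodule.span_le.mpr ?_)
        rintro _ ⟨i, rfl⟩
        by_cases hi : i ∈ Set.range f
        · obtain ⟨k, rfl⟩ := hi
          exact Submodule.subset_span ⟨k, rfl⟩
        · simp [Matrix.row, h i hi]
    _ ≤ Fintype.card κ := finrank_range_le_card _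

theorem FiniteField.two_ne_zero_of_odd_card {F : Type*} [Field F] [Fintype F]
    (h : Odd (Fintype.card F)) : (2 : F) ≠ 0 :=
  Ring.two_ne_zero fun h2 =>
    Nat.not_even_iff_odd.mpr h (Nat.even_iff.mpr (even_card_iff_char_two.mp h2))

theorem schur_pow_eq_of_add_eq {F : Type*} [Field F] {n : ℕ} (x y : Fin n → F) (k a b c : ℕ)
    (h : a + b = 2 * c) :
    schur (fun t => (x t ^ a * y t) ^ k) (fun t => (x t ^ b * y t) ^ k) =
      schur (fun t => (x t ^ c * y t) ^ k) (fun t => (x t ^ c * y t) ^ k) := by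
  funext t
  simp only [schur, ← mul_pow]
  congr 1
  calc x t ^ a * y t * (x t ^ b * y t) = x t ^ (a + b) * y t ^ 2 := by ring
    _ = x t ^ c * y t * (x t ^ c * y t) := by rw [h]; ring

theorem schur_comm {F : Type*} [Field F] {n : ℕ} (a b : Fin n → F) : schur a b = schur b a :=
  funext fun t => mul_comm (a t) (b t)

section relMatrix

variable {F : Type*} [Field F] {ι : Type*} [DecidableEq ι]

def relMatrix (d : F) (u v w : ι) : Matrix ι ι F := fun i j =>
  if (i = u ∧ j = v) ∨ (i = v ∧ j = u) then 1 else if i = w ∧ j = w then d else 0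

theorem relMatrix_symm (d : F) (u v w i j : ι) :
    relMatrix d u v w j i = relMatrix d u v w i j := by
  simp only [relMatrix, or_comm, and_comm]

theorem relMatrix_of_ne (d d' : F) (u v w : ι) {i j : ι} (h : i ≠ j) :
    relMatrix d u v w i j = relMatrix d' u v w i j := by
  have : ¬(i = w ∧ j = w) := fun ⟨hi, hj⟩ => h (hi.trans hj.symm)
  simp only [relMatrix, this, if_false]

theorem relMatrix_diag (d : F) {u v : ι} (huv : u ≠ v) (w i : ι) :
    relMatrix d u v w i i = if i = w then d else 0 := by
  have : ¬((i = u ∧ i = v) ∨ (i = v ∧ i = u)) := by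
    rintro (⟨rfl, rfl⟩ | ⟨rfl, rfl⟩) <;> exact huv rfl
  simp [relMatrix, this]

theorem relMatrix_eq_zero (d : F) (u v w : ι) {i j : ι}
    (h : (i, j) ∉ ({(u, v), (v, u), (w, w)} : Finset (ι × ι))) :
    relMatrix d u v w i j = 0 := by
  simp only [Finset.mem_insert, Finset.mem_singleton, Prod.mk.injEq, not_or] at h
  simp [relMatrix, h]

theorem relMatrix_row_eq_zero (d : F) (u v w : ι) {i : ι} (hu : i ≠ u) (hv : i ≠ v)
    (hw : i ≠ w) : relMatrix d u v w i = 0 := by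
  funext j
  simp [relMatrix, hu, hv, hw]

theorem relMatrix_submatrix (d : F) {u v w : ι} (huv : u ≠ v) (huw : u ≠ w) (hvw : v ≠ w) :
    (relMatrix d u v w).submatrix ![u, v, w] ![u, v, w] = !![0, 1, 0; 1, 0, 0; 0, 0, d] := by
  ext i j
  fin_cases i <;> fin_cases j <;> simp [relMatrix, huv, huw, hvw, huv.symm, huw.symm, hvw.symm]

theorem rank_relMatrix [Fintype ι] {d : F} (hd : d ≠ 0) {u v w : ι}
    (huv : u ≠ v) (huw : u ≠ w) (hvw : v ≠ w) : (relMatrix d u v w).rank = 3 := by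
  apply le_antisymm
  · simpa using (relMatrix d u v w).rank_le_card_of_row_eq_zero ![u, v, w] fun i hi =>
      relMatrix_row_eq_zero d u v w (fun h => hi ⟨0, h.symm⟩) (fun h => hi ⟨1, h.symm⟩)
        (fun h => hi ⟨2, h.symm⟩)
  · have hdet : IsUnit (!![0, 1, 0; 1, 0, 0; 0, 0, d] : Matrix (Fin 3) (Fin 3) F).det := by
      simp [det_fin_three, hd]
    calc 3 = (!![0, 1, 0; 1, 0, 0; 0, 0, d] : Matrix (Fin 3) (Fin 3) F).rank := by
          rw [rank_of_isUnit _ ((isUnit_iff_isUnit_det _).mpr hdet), Fintype.card_fin]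
      _ ≤ (relMatrix d u v w).rank := by
          rw [← relMatrix_submatrix d huv huw hvw]
          exact rank_submatrix_le _ _ _

/- The diagonal of `Cmat` is doubled, so the relation `A u ⋆ A v - A w ⋆ A w = 0` has
coefficients `relMatrix (-1)` and matrix `relMatrix (-2)`. -/
theorem relMatrix_mem_Cmat [Fintype ι] [LinearOrder ι] {n : ℕ} (A : ι → Fin n → F)
    {u v w : ι} (huv : u ≠ v) (huw : u ≠ w) (hvw : v ≠ w)
    (h : schur (A u) (A v) = schur (A w) (A w)) :
    relMatrix (-2) u v w ∈ Cmat A := by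
  refine ⟨relMatrix (-1) u v w, ?_, fun i j hij => ⟨relMatrix_of_ne _ _ _ _ _ hij.ne,
    (relMatrix_symm _ _ _ _ _ _).trans (relMatrix_of_ne _ _ _ _ _ hij.ne)⟩, fun i => ?_⟩
  · rw [← Fintype.sum_prod_type',
      ← Finset.sum_subset (Finset.subset_univ {(u, v), (v, u), (w, w)})
        fun p _ hp => by simp [relMatrix_eq_zero _ _ _ _ hp]]
    rw [Finset.sum_insert (by simp [huv, huw]), Finset.sum_insert (by simp [hvw]),
      Finset.sum_singleton, relMatrix_diag _ huv, schur_comm (A v), ← h]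
    rcases lt_or_gt_of_ne huv with hlt | hlt <;> simp [relMatrix, hlt.not_ge, hlt.le]
  · rw [relMatrix_diag _ huv, relMatrix_diag _ huv]
    split_ifs <;> norm_num

end relMatrix

theorem cmat_rank_three_odd_char_general
    (q m r nn : ℕ) (hq : ∃ p e : ℕ, p.Prime ∧ Odd p ∧ 0 < e ∧ q = p ^ e)
    (F : Type*) [Field F] [Fintype F] (hF : Fintype.card F = q ^ m)
    (x y : Fin nn → F)
    (A : Fin m × Fin r → Fin nn → F)
    (hA : A = fun p t => (x t ^ (p.2 : ℕ) * y t) ^ q ^ (p.1 : ℕ))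
    (l : Fin m) (a b c : Fin r)
    (hab : a ≠ b) (hac : a ≠ c) (hbc : b ≠ c)
    (habc : (a : ℕ) + (b : ℕ) = 2 * (c : ℕ))
    (M : Matrix (Fin m × Fin r) (Fin m × Fin r) F)
    (hM : M = fun p p' =>
      if (p = (l, a) ∧ p' = (l, b)) ∨ (p = (l, b) ∧ p' = (l, a)) then 1
      else if p = (l, c) ∧ p' = (l, c) then (-2 : F) else 0) :
    M ∈ Cmat A ∧ M.rank = 3 := by
  obtain ⟨p, e, -, hp, -, rfl⟩ := hq
  have h2 : (2 : F) ≠ 0 := FiniteField.two_ne_zero_of_odd_card (hF ▸ hp.pow.pow)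
  have huv : (l, a) ≠ (l, b) := by simpa using hab
  have huw : (l, a) ≠ (l, c) := by simpa using hac
  have hvw : (l, b) ≠ (l, c) := by simpa using hbc
  subst hA hM
  exact ⟨relMatrix_mem_Cmat _ huv huw hvw (schur_pow_eq_of_add_eq x y _ _ _ _ habc),
    rank_relMatrix (neg_ne_zero.mpr h2) huv huw hvw⟩

/-- Let `q` be a power of an odd prime, `F` a field with `q^m` elements
and `A` the canonical family `a_{(j,i)} = (x^i y)^{q^j}` (assumed linearly independent).
If `l ∈ {0,…,m−1}` and `a,b,c ∈ {0,…,r−1}` are pairwise distinct with `a + b = 2c`,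
then the symmetric matrix `M` with `M_{(l,a),(l,b)} = M_{(l,b),(l,a)} = 1`,
`M_{(l,c),(l,c)} = −2` and all other entries `0` belongs to `C_mat(A)` and has rank `3`. -/
theorem cmat_rank_three_odd_char
    (q m r nn : ℕ) (hq : ∃ p e : ℕ, p.Prime ∧ Odd p ∧ 0 < e ∧ q = p ^ e)
    (hm : 0 < m) (hr : 0 < r) (hn : 0 < nn)
    (F : Type*) [Field F] [Fintype F] (hF : Fintype.card F = q ^ m)
    (x y : Fin nn → F) (hx : Function.Injective x) (hy : ∀ t, y t ≠ 0)
    (A : Fin m × Fin r → Fin nn → F)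
    (hA : A = fun p t => (x t ^ (p.2 : ℕ) * y t) ^ q ^ (p.1 : ℕ))
    (hAind : LinearIndependent F A)
    (l : Fin m) (a b c : Fin r)
    (hab : a ≠ b) (hac : a ≠ c) (hbc : b ≠ c)
    (habc : (a : ℕ) + (b : ℕ) = 2 * (c : ℕ))
    (M : Matrix (Fin m × Fin r) (Fin m × Fin r) F)
    (hM : M = fun p p' =>
      if (p = (l, a) ∧ p' = (l, b)) ∨ (p = (l, b) ∧ p' = (l, a)) then 1
      else if p = (l, c) ∧ p' = (l, c) then (-2 : F) else 0) :
    M ∈ Cmat A ∧ M.rank = 3 :=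
  cmat_rank_three_odd_char_general q m r nn hq F hF x y A hA l a b c hab hac hbc habc M hM
end

section
/- Assume the m codes GRS_r(x,y)^{(q^0)}, …, GRS_r(x,y)^{(q^{m−1})} are in direct sum in F_{q^m}^n, and let B be an ordered basis of the F_{q^m}-span C of the canonical family A of the form B = (b_1,…,b_r, b_1^{(q)},…,b_r^{(q)}, …, b_1^{(q^{m−1})},…,b_r^{(q^{m−1})}), with change-of-basis matrix P (so H_B = P·H_A). Let u_1, u_2 ∈ F_{q^m}^{rm} be nonzero row vectors such that for t = 1, 2 there is j_t ∈ {0,…,m−1} with u_t·(P^{−1})ᵀ·P^{−1}·H_B ∈ GRS_r(x,y)^{(q^{j_t})}. Then there exists a unique l ∈ {0,…,m−1} such that u_1 and u_2^{(q^l)}·S^l correspond to the same GRS code with respect to B, i.e., there is j ∈ {0,…,m−1} with both u_1·(P^{−1})ᵀ·P^{−1}·H_B and (u_2^{(q^l)}·S^l)·(P^{−1})ᵀ·P^{−1}·H_B in GRS_r(x,y)^{(q^j)}. -/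
/-!
Both `H_A` and `H_B` have Frobenius-shaped rows, so raising entries to the `q`-th power (a ring
endomorphism `φ`) permutes their rows by the block shift: `H^φ = S H`. Since the rows of `H_A` are
independent, `H_B = P H_A` forces `P^φ = S P Sᵀ`, and as `S` is a permutation matrix the same holds
for `(P⁻¹)ᵀ`; hence `N = (P⁻¹)ᵀ P⁻¹ H_B = (P⁻¹)ᵀ H_A` also satisfies `N^φ = S N`. Consequently
`(u^{(q^l)} S^l) N = (u N)^{(q^l)}`, and the `l`-th Frobenius power carries `GRS^{(q^j)}` onto
`GRS^{(q^{j+l})}`. The twisted GRS codes being in direct sum, a nonzero word lies in at most one of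
them, so `l = j₁ - j₂` is the only shift that works.
-/

open Matrix

/-- The right `r`-cyclic block shift matrix `S`: its block in position `(i,j)`
(with `r×r` blocks) is the identity if `j ≡ i + 1 (mod m)` and zero otherwise. -/
def shiftS (F : Type*) [Field F] (m r : ℕ) [NeZero m] :
    Matrix (Fin m × Fin r) (Fin m × Fin r) F :=
  Matrix.of fun p p' => if p'.1 = p.1 + 1 ∧ p'.2 = p.2 then 1 else 0

/-- The Frobenius twist `GRS_k(x,y)^{(q^j)}` of the generalized Reed–Solomon code
`GRS_k(x,y)`, as a subset of `F^n`. -/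
def GRSfrob {F : Type*} [Field F] {n : ℕ} (q k j : ℕ) (x y : Fin n → F) :
    Set (Fin n → F) :=
  { w | ∃ P : Polynomial F, P.degree < (k : WithBot ℕ) ∧
      w = fun t => (y t * P.eval (x t)) ^ q ^ j }

theorem Matrix.eq_of_mul_eq_mul_of_linearIndependent_row {ι ι' κ R : Type*} [Fintype ι]
    [CommRing R] {M M' : Matrix ι' ι R} {H : Matrix ι κ R} (hH : LinearIndependent R H.row)
    (h : M * H = M' * H) : M = M' :=
  funext fun i => Matrix.vecMul_injective_iff.2 hH (congrFun h i)

theorem Matrix.map_nonsing_inv {ι R K : Type*} [Fintype ι] [DecidableEq ι] [CommRing R]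
    [CommRing K] (f : R →+* K) {P : Matrix ι ι R} (hP : IsUnit P) :
    P⁻¹.map f = (P.map f)⁻¹ := by
  refine (Matrix.inv_eq_left_inv ?_).symm
  rw [← Matrix.map_mul, Matrix.nonsing_inv_mul P ((Matrix.isUnit_iff_isUnit_det P).1 hP),
    Matrix.map_one f f.map_zero f.map_one]

section SemilinearConjugation

variable {ι κ F : Type*} [Fintype ι] [DecidableEq ι] [Field F] (φ : F →+* F)
  {S : Matrix ι ι F}

theorem map_eq_conj_of_map_eq_mul (hS : S * Sᵀ = 1) {H : Matrix ι κ F}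
    (hH : LinearIndependent F H.row) (hHφ : H.map φ = S * H) {P : Matrix ι ι F}
    (hPH : (P * H).map φ = S * (P * H)) : P.map φ = S * P * Sᵀ := by
  have hcomm : P.map φ * S = S * P := by
    refine Matrix.eq_of_mul_eq_mul_of_linearIndependent_row hH ?_
    rw [Matrix.mul_assoc, ← hHφ, ← Matrix.map_mul, hPH, Matrix.mul_assoc]
  rw [← hcomm, Matrix.mul_assoc, hS, Matrix.mul_one]

theorem map_inv_transpose_eq_conj (hS : S * Sᵀ = 1) {P : Matrix ι ι F} (hP : IsUnit P)
    (hPφ : P.map φ = S * P * Sᵀ) : P⁻¹ᵀ.map φ = S * P⁻¹ᵀ * Sᵀ := by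
  have hSinv : S⁻¹ = Sᵀ := Matrix.inv_eq_left_inv (mul_eq_one_comm.1 hS)
  have hStinv : Sᵀ⁻¹ = S := Matrix.inv_eq_left_inv hS
  rw [Matrix.transpose_map, Matrix.map_nonsing_inv φ hP, hPφ, Matrix.mul_inv_rev,
    Matrix.mul_inv_rev, hSinv, hStinv]
  simp only [Matrix.transpose_mul, Matrix.transpose_transpose, Matrix.mul_assoc]

theorem map_mul_eq_mul_of_conj (hS : Sᵀ * S = 1) {X : Matrix ι ι F} {M : Matrix ι κ F}
    (hX : X.map φ = S * X * Sᵀ) (hM : M.map φ = S * M) : (X * M).map φ = S * (X * M) := by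
  rw [Matrix.map_mul, hX, hM, Matrix.mul_assoc, Matrix.mul_assoc, ← Matrix.mul_assoc Sᵀ, hS,
    Matrix.one_mul]

theorem map_pow_eq_pow_mul (hSφ : S.map φ = S) {M : Matrix ι κ F} (hM : M.map φ = S * M)
    (k : ℕ) : M.map ⇑(φ ^ k) = S ^ k * M := by
  induction k with
  | zero => simp
  | succ k ih =>
    have hSk : (S ^ k).map φ = S ^ k := by rw [← RingHom.mapMatrix_apply, map_pow,
      RingHom.mapMatrix_apply, hSφ]
    rw [pow_succ', RingHom.coe_mul, ← Matrix.map_map, ih, Matrix.map_mul, hSk, hM, pow_succ,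
      Matrix.mul_assoc]

theorem vecMul_pow_vecMul_of_map_eq_mul (hSφ : S.map φ = S) {M : Matrix ι κ F}
    (hM : M.map φ = S * M) (k : ℕ) (u : ι → F) :
    (⇑(φ ^ k) ∘ u) ᵥ* S ^ k ᵥ* M = ⇑(φ ^ k) ∘ (u ᵥ* M) := by
  funext t
  rw [Matrix.vecMul_vecMul, ← map_pow_eq_pow_mul φ hSφ hM, Function.comp_apply,
    RingHom.map_vecMul]

end SemilinearConjugation

theorem pow_pow_eq_of_modEq {F : Type*} [Field F] [Fintype F] {m q : ℕ}
    (hF : Fintype.card F = q ^ m) (a : F) {s t : ℕ} (h : s ≡ t [MOD m]) :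
    a ^ q ^ s = a ^ q ^ t := by
  have hmod : ∀ s, a ^ q ^ s = a ^ q ^ (s % m) := fun s => by
    conv_lhs => rw [← Nat.div_add_mod s m, Nat.add_comm, pow_add, pow_mul, pow_mul, ← hF,
      FiniteField.pow_card_pow]
  rw [hmod s, hmod t, h]

theorem Fin.val_add_modEq {m : ℕ} (a b : Fin m) : ((a + b : Fin m) : ℕ) ≡ a + b [MOD m] := by
  rw [Fin.val_add]
  exact Nat.mod_modEq _ _

section FrobeniusShift

variable {F : Type*} [Field F] {m r : ℕ} [NeZero m]

theorem shiftS_mul_apply {κ : Type*} (M : Matrix (Fin m × Fin r) κ F) (p : Fin m × Fin r)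
    (t : κ) : (shiftS F m r * M) p t = M (p.1 + 1, p.2) t := by
  rw [Matrix.mul_apply, Finset.sum_eq_single (p.1 + 1, p.2)]
  · simp [shiftS]
  · rintro p' - hp'
    rw [shiftS, Matrix.of_apply, if_neg (fun h => hp' (Prod.ext h.1 h.2)), zero_mul]
  · simp

theorem shiftS_mul_transpose : shiftS F m r * (shiftS F m r)ᵀ = 1 := by
  ext p p'
  rw [shiftS_mul_apply, Matrix.transpose_apply, shiftS, Matrix.of_apply, Matrix.one_apply]
  simp only [add_left_inj, Prod.ext_iff]

theorem shiftS_map (φ : F →+* F) : (shiftS F m r).map φ = shiftS F m r := by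
  ext p p'
  simp only [shiftS, Matrix.map_apply, Matrix.of_apply, apply_ite φ, map_one, map_zero]

def frobeniusShapedMatrix (F : Type*) [Field F] (m : ℕ) {r : ℕ} {κ : Type*} (q : ℕ)
    (β : Fin r → κ → F) : Matrix (Fin m × Fin r) κ F :=
  Matrix.of fun p t => β p.2 t ^ q ^ (p.1 : ℕ)

theorem map_frobeniusShapedMatrix [Fintype F] {q : ℕ} (hF : Fintype.card F = q ^ m)
    {φ : F →+* F} (hφ : ∀ a, φ a = a ^ q) {κ : Type*} (β : Fin r → κ → F) :
    (frobeniusShapedMatrix F m q β).map φ = shiftS F m r * frobeniusShapedMatrix F m q β := by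
  ext p t
  rw [shiftS_mul_apply, Matrix.map_apply, frobeniusShapedMatrix, Matrix.of_apply,
    Matrix.of_apply, hφ, ← pow_mul, ← pow_succ]
  refine pow_pow_eq_of_modEq hF _ (Nat.ModEq.trans ?_ (Fin.val_add_modEq p.1 1).symm)
  rw [Fin.val_one']
  exact Nat.ModEq.add_left _ (Nat.mod_modEq 1 m).symm

end FrobeniusShift

theorem exists_ringHom_eq_pow_of_card_eq_pow {F : Type*} [Field F] [Fintype F] {q m : ℕ}
    [NeZero m] (hF : Fintype.card F = q ^ m) : ∃ φ : F →+* F, ∀ a, φ a = a ^ q := by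
  obtain ⟨n, hp, hcard⟩ := FiniteField.card F (ringChar F)
  have hq : q ∣ ringChar F ^ (n : ℕ) := hcard ▸ hF ▸ dvd_pow_self q (NeZero.ne m)
  obtain ⟨e, -, rfl⟩ := (Nat.dvd_prime_pow hp).1 hq
  have : ExpChar F (ringChar F) := ExpChar.prime hp
  exact ⟨iterateFrobenius F (ringChar F) e, fun _ => iterateFrobenius_def ..⟩

theorem RingHom.pow_apply_eq_pow_pow {F : Type*} [Field F] {q : ℕ} {φ : F →+* F}
    (hφ : ∀ a, φ a = a ^ q) (j : ℕ) (a : F) : (φ ^ j) a = a ^ q ^ j := by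
  induction j with
  | zero => simp
  | succ j ih =>
    rw [pow_succ', RingHom.coe_mul, Function.comp_apply, ih, hφ, ← pow_mul, ← pow_succ]

section GRS

variable {F : Type*} [Field F] {m n q k : ℕ} {x y : Fin n → F} {φ : F →+* F}

theorem zero_mem_GRSfrob (hφ : ∀ a, φ a = a ^ q) (j : ℕ) : 0 ∈ GRSfrob q k j x y :=
  ⟨0, by simp, funext fun t => by simp [← RingHom.pow_apply_eq_pow_pow hφ]⟩

theorem neg_mem_GRSfrob (hφ : ∀ a, φ a = a ^ q) {j : ℕ} {w : Fin n → F}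
    (hw : w ∈ GRSfrob q k j x y) : -w ∈ GRSfrob q k j x y := by
  obtain ⟨P, hdeg, rfl⟩ := hw
  refine ⟨-P, by rwa [Polynomial.degree_neg], funext fun t => ?_⟩
  simp only [Pi.neg_apply, Polynomial.eval_neg, mul_neg, ← RingHom.pow_apply_eq_pow_pow hφ,
    map_neg]

theorem pow_mem_GRSfrob [NeZero m] [Fintype F] (hF : Fintype.card F = q ^ m) {j : Fin m}
    (l : Fin m) {w : Fin n → F} (hw : w ∈ GRSfrob q k j x y) :
    (fun t => w t ^ q ^ (l : ℕ)) ∈ GRSfrob q k (j + l : Fin m) x y := by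
  obtain ⟨P, hdeg, rfl⟩ := hw
  refine ⟨P, hdeg, funext fun t => ?_⟩
  rw [← pow_mul, ← pow_add]
  exact pow_pow_eq_of_modEq hF _ (Fin.val_add_modEq j l).symm

variable (hds : ∀ c : Fin m → Fin n → F,
  (∀ j : Fin m, c j ∈ GRSfrob q k (j : ℕ) x y) → ∑ j, c j = 0 → ∀ j, c j = 0)
include hds

theorem eq_of_mem_GRSfrob_of_mem_GRSfrob (hφ : ∀ a, φ a = a ^ q) {w : Fin n → F} (hw : w ≠ 0)
    {a b : Fin m} (ha : w ∈ GRSfrob q k a x y) (hb : w ∈ GRSfrob q k b x y) : a = b := by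
  by_contra hab
  have hsum := hds (fun j => (if j = a then w else 0) + (if j = b then -w else 0)) ?_ ?_ a
  · exact hw (by simpa [hab] using hsum)
  · intro j
    by_cases hja : j = a
    · subst hja; simpa [hab] using ha
    · by_cases hjb : j = b
      · subst hjb; simpa [hja] using neg_mem_GRSfrob hφ hb
      · simpa [hja, hjb] using zero_mem_GRSfrob hφ j
  · simp [Finset.sum_add_distrib]

theorem existsUnique_pow_mem_GRSfrob [NeZero m] [Fintype F] (hF : Fintype.card F = q ^ m)
    (hφ : ∀ a, φ a = a ^ q) {w₁ w₂ : Fin n → F} (hw₁ : w₁ ≠ 0) (hw₂ : w₂ ≠ 0) {j₁ j₂ : Fin m}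
    (h₁ : w₁ ∈ GRSfrob q k j₁ x y) (h₂ : w₂ ∈ GRSfrob q k j₂ x y) :
    ∃! l : Fin m, ∃ j : Fin m,
      w₁ ∈ GRSfrob q k j x y ∧ (fun t => w₂ t ^ q ^ (l : ℕ)) ∈ GRSfrob q k j x y := by
  refine ⟨j₁ - j₂, ⟨j₁, h₁, by simpa using pow_mem_GRSfrob hF (j₁ - j₂) h₂⟩, ?_⟩
  rintro l ⟨j, hj₁, hj₂⟩
  obtain rfl := eq_of_mem_GRSfrob_of_mem_GRSfrob hds hφ hw₁ hj₁ h₁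
  have hw₂l : (fun t => w₂ t ^ q ^ (l : ℕ)) ≠ 0 := fun h => hw₂ <| funext fun t => by
    simpa only [← RingHom.pow_apply_eq_pow_pow hφ, Pi.zero_apply, map_eq_zero] using congrFun h t
  exact eq_sub_of_add_eq'
    (eq_of_mem_GRSfrob_of_mem_GRSfrob hds hφ hw₂l (pow_mem_GRSfrob hF l h₂) hj₂)

end GRS

theorem unique_shift_same_GRS_general
    (q m r nn : ℕ) [NeZero m]
    (F : Type*) [Field F] [Fintype F] (hF : Fintype.card F = q ^ m)
    (x y : Fin nn → F)
    (A : Fin m × Fin r → Fin nn → F)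
    (hA : A = fun p t => (x t ^ (p.2 : ℕ) * y t) ^ q ^ (p.1 : ℕ))
    (hAind : LinearIndependent F A)
    (hds : ∀ c : Fin m → Fin nn → F,
      (∀ j : Fin m, c j ∈ GRSfrob q r (j : ℕ) x y) → ∑ j, c j = 0 → ∀ j, c j = 0)
    (β : Fin r → Fin nn → F)
    (b : Fin m × Fin r → Fin nn → F)
    (hb : b = fun p t => β p.2 t ^ q ^ (p.1 : ℕ))
    (HA HB : Matrix (Fin m × Fin r) (Fin nn) F)
    (hHA : HA = Matrix.of fun p t => A p t)
    (hHB : HB = Matrix.of fun p t => b p t)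
    (P : Matrix (Fin m × Fin r) (Fin m × Fin r) F)
    (hPunit : IsUnit P) (hPchange : HB = P * HA)
    (u₁ u₂ : Fin m × Fin r → F) (hu₁ : u₁ ≠ 0) (hu₂ : u₂ ≠ 0)
    (j₁ j₂ : Fin m)
    (hj₁ : Matrix.vecMul u₁ ((P⁻¹)ᵀ * P⁻¹ * HB) ∈ GRSfrob q r (j₁ : ℕ) x y)
    (hj₂ : Matrix.vecMul u₂ ((P⁻¹)ᵀ * P⁻¹ * HB) ∈ GRSfrob q r (j₂ : ℕ) x y) :
    ∃! l : Fin m, ∃ j : Fin m,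
      Matrix.vecMul u₁ ((P⁻¹)ᵀ * P⁻¹ * HB) ∈ GRSfrob q r (j : ℕ) x y ∧
      Matrix.vecMul
          (Matrix.vecMul (fun p => u₂ p ^ q ^ (l : ℕ)) (shiftS F m r ^ (l : ℕ)))
          ((P⁻¹)ᵀ * P⁻¹ * HB) ∈ GRSfrob q r (j : ℕ) x y := by
  obtain ⟨φ, hφ⟩ := exists_ringHom_eq_pow_of_card_eq_pow hF
  have hHAφ : HA.map φ = shiftS F m r * HA := by
    subst hHA hA; exact map_frobeniusShapedMatrix hF hφ fun i t => x t ^ (i : ℕ) * y t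
  have hHBφ : HB.map φ = shiftS F m r * HB := by
    subst hHB hb; exact map_frobeniusShapedMatrix hF hφ β
  have hHAind : LinearIndependent F HA.row := by subst hHA; exact hAind
  have hPφ := map_eq_conj_of_map_eq_mul φ shiftS_mul_transpose hHAind hHAφ (hPchange ▸ hHBφ)
  have hN : (P⁻¹)ᵀ * P⁻¹ * HB = (P⁻¹)ᵀ * HA := by
    rw [hPchange, Matrix.mul_assoc,
      Matrix.nonsing_inv_mul_cancel_left _ _ ((Matrix.isUnit_iff_isUnit_det P).1 hPunit)]
  have hNφ : ((P⁻¹)ᵀ * HA).map φ = shiftS F m r * ((P⁻¹)ᵀ * HA) :=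
    map_mul_eq_mul_of_conj φ (mul_eq_one_comm.1 shiftS_mul_transpose)
      (map_inv_transpose_eq_conj φ shiftS_mul_transpose hPunit hPφ) hHAφ
  have htwist : ∀ (l : ℕ) (u : Fin m × Fin r → F),
      (fun p => u p ^ q ^ l) ᵥ* shiftS F m r ^ l ᵥ* ((P⁻¹)ᵀ * HA) =
        fun t => (u ᵥ* ((P⁻¹)ᵀ * HA)) t ^ q ^ l := fun l u => by
    simpa only [← RingHom.pow_apply_eq_pow_pow hφ, Function.comp_def] using
      vecMul_pow_vecMul_of_map_eq_mul φ (shiftS_map φ) hNφ l u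
  have hinj : Function.Injective fun u : Fin m × Fin r → F => u ᵥ* ((P⁻¹)ᵀ * HA) := by
    simp only [← Matrix.vecMul_vecMul]
    exact (Matrix.vecMul_injective_iff.2 hHAind).comp (Matrix.vecMul_injective_of_isUnit
      ((Matrix.isUnit_transpose _).2 (Matrix.isUnit_nonsing_inv_iff.2 hPunit)))
  rw [hN] at hj₁ hj₂ ⊢
  simp only [htwist]
  exact existsUnique_pow_mem_GRSfrob hds hF hφ (hinj.ne hu₁ |>.trans_eq (Matrix.zero_vecMul _))
    (hinj.ne hu₂ |>.trans_eq (Matrix.zero_vecMul _)) hj₁ hj₂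

/-- Assume the `m` codes `GRS_r(x,y)^{(q^j)}` are in direct sum, let
`B` be a Frobenius-shaped ordered basis of the span `C` of the canonical family `A`,
with change-of-basis matrix `P` (so `H_B = P·H_A`), and let `u₁, u₂` be nonzero row
vectors such that `u_t·(P⁻¹)ᵀ·P⁻¹·H_B ∈ GRS_r(x,y)^{(q^{j_t})}` for some `j_t`. Then
there is a unique `l ∈ {0,…,m−1}` such that `u₁` and `u₂^{(q^l)}·S^l` correspond to the
same GRS code with respect to `B`. -/
theorem unique_shift_same_GRS
    (q m r nn : ℕ) [NeZero m] (hq : ∃ p e : ℕ, p.Prime ∧ 0 < e ∧ q = p ^ e)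
    (hr : 0 < r) (hn : 0 < nn)
    (F : Type*) [Field F] [Fintype F] (hF : Fintype.card F = q ^ m)
    (x y : Fin nn → F) (hx : Function.Injective x) (hy : ∀ t, y t ≠ 0)
    (A : Fin m × Fin r → Fin nn → F)
    (hA : A = fun p t => (x t ^ (p.2 : ℕ) * y t) ^ q ^ (p.1 : ℕ))
    (hAind : LinearIndependent F A)
    (hds : ∀ c : Fin m → Fin nn → F,
      (∀ j : Fin m, c j ∈ GRSfrob q r (j : ℕ) x y) → ∑ j, c j = 0 → ∀ j, c j = 0)
    (β : Fin r → Fin nn → F)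
    (b : Fin m × Fin r → Fin nn → F)
    (hb : b = fun p t => β p.2 t ^ q ^ (p.1 : ℕ))
    (hbind : LinearIndependent F b)
    (hbspan : Submodule.span F (Set.range b) = Submodule.span F (Set.range A))
    (HA HB : Matrix (Fin m × Fin r) (Fin nn) F)
    (hHA : HA = Matrix.of fun p t => A p t)
    (hHB : HB = Matrix.of fun p t => b p t)
    (P : Matrix (Fin m × Fin r) (Fin m × Fin r) F)
    (hPunit : IsUnit P) (hPchange : HB = P * HA)
    (u₁ u₂ : Fin m × Fin r → F) (hu₁ : u₁ ≠ 0) (hu₂ : u₂ ≠ 0)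
    (j₁ j₂ : Fin m)
    (hj₁ : Matrix.vecMul u₁ ((P⁻¹)ᵀ * P⁻¹ * HB) ∈ GRSfrob q r (j₁ : ℕ) x y)
    (hj₂ : Matrix.vecMul u₂ ((P⁻¹)ᵀ * P⁻¹ * HB) ∈ GRSfrob q r (j₂ : ℕ) x y) :
    ∃! l : Fin m, ∃ j : Fin m,
      Matrix.vecMul u₁ ((P⁻¹)ᵀ * P⁻¹ * HB) ∈ GRSfrob q r (j : ℕ) x y ∧
      Matrix.vecMul
          (Matrix.vecMul (fun p => u₂ p ^ q ^ (l : ℕ)) (shiftS F m r ^ (l : ℕ)))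
          ((P⁻¹)ᵀ * P⁻¹ * HB) ∈ GRSfrob q r (j : ℕ) x y :=
  unique_shift_same_GRS_general q m r nn F hF x y A hA hAind hds β b hb HA HB hHA hHB P hPunit
    hPchange u₁ u₂ hu₁ hu₂ j₁ j₂ hj₁ hj₂
end
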